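/- arXiv:2305.05946 — 2 statements merged into one kernel-verified Lean document; each statement's English description precedes it below -/
import Mathlib

section
/- Nonlocal Gauss–Green formula: let D ⊆ ℝ^d be measurable, ν: ℝ^d → [0,∞) measurable and symmetric (ν(−x)=ν(x)), and u, v: ℝ^d → ℝ measurable functions such that the function (x,y) ↦ |u(x)−u(y)|·(|v(x)|+|v(y)|)·ν(x−y) is Lebesgue integrable over (D^c×D^c)^c = (ℝ^d×ℝ^d) \ (D^c×D^c). Define 𝓛u(x) = ∫_{ℝ^d} (u(x)−u(y)) ν(x−y) dy for x ∈ D and 𝓝u(y) = ∫_D (u(y)−u(x)) ν(x−y) dx for y ∈ D^c. Then ∫_D 𝓛u(x) v(x) dx = ½ ∬_{(D^c×D^c)^c} (u(x)−u(y))(v(x)−v(y)) ν(x−y) dx dy − ∫_{D^c} 𝓝u(y) v(y) dy. -/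
open MeasureTheory Set

/-- Nonlocal Gauss–Green formula: for a measurable set `D ⊆ ℝ^d`,
a measurable symmetric kernel `ν : ℝ^d → [0,∞)` and measurable `u v : ℝ^d → ℝ` with
`(x,y) ↦ |u x - u y|·(|v x| + |v y|)·ν (x-y)` integrable on `(Dᶜ ×ˢ Dᶜ)ᶜ`, one has
`∫_D 𝓛u·v = ½ ∬_{(Dᶜ×Dᶜ)ᶜ} (u(x)-u(y))(v(x)-v(y)) ν(x-y) - ∫_{Dᶜ} 𝓝u·v`. -/
theorem nonlocal_gauss_green {d : ℕ} (D : Set (EuclideanSpace ℝ (Fin d)))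
    (hD : MeasurableSet D)
    (ν : EuclideanSpace ℝ (Fin d) → ℝ) (hν_meas : Measurable ν)
    (hν_nonneg : ∀ x, 0 ≤ ν x) (hν_symm : ∀ x, ν (-x) = ν x)
    (u v : EuclideanSpace ℝ (Fin d) → ℝ) (hu : Measurable u) (hv : Measurable v)
    (hint : IntegrableOn
      (fun p : EuclideanSpace ℝ (Fin d) × EuclideanSpace ℝ (Fin d) =>
        |u p.1 - u p.2| * (|v p.1| + |v p.2|) * ν (p.1 - p.2))
      ((Dᶜ ×ˢ Dᶜ)ᶜ) volume) :
    ∫ x in D, (∫ y, (u x - u y) * ν (x - y)) * v x =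
      (1 / 2) * (∫ p in ((Dᶜ ×ˢ Dᶜ)ᶜ : Set (EuclideanSpace ℝ (Fin d) × EuclideanSpace ℝ (Fin d))),
          (u p.1 - u p.2) * (v p.1 - v p.2) * ν (p.1 - p.2)) -
        ∫ y in Dᶜ, (∫ x in D, (u y - u x) * ν (x - y)) * v y := by
  have hνsymm' : ∀ a b : EuclideanSpace ℝ (Fin d), ν (a - b) = ν (b - a) := fun a b => by
    rw [← hν_symm (b - a), neg_sub]
  have hvolprod : (volume : Measure (EuclideanSpace ℝ (Fin d) × EuclideanSpace ℝ (Fin d))) =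
      (volume : Measure (EuclideanSpace ℝ (Fin d))).prod volume := rfl
  -- measurability
  have hgm : Measurable fun p : EuclideanSpace ℝ (Fin d) × EuclideanSpace ℝ (Fin d) =>
      (u p.1 - u p.2) * ν (p.1 - p.2) * v p.1 := by
    apply Measurable.mul
    · exact ((hu.comp measurable_fst).sub (hu.comp measurable_snd)).mul
        (hν_meas.comp (measurable_fst.sub measurable_snd))
    · exact hv.comp measurable_fst
  have hg'm : Measurable fun p : EuclideanSpace ℝ (Fin d) × EuclideanSpace ℝ (Fin d) =>
      (u p.1 - u p.2) * ν (p.1 - p.2) * v p.2 := by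
    apply Measurable.mul
    · exact ((hu.comp measurable_fst).sub (hu.comp measurable_snd)).mul
        (hν_meas.comp (measurable_fst.sub measurable_snd))
    · exact hv.comp measurable_snd
  -- integrability on E
  have hgE : IntegrableOn
      (fun p : EuclideanSpace ℝ (Fin d) × EuclideanSpace ℝ (Fin d) =>
        (u p.1 - u p.2) * ν (p.1 - p.2) * v p.1) ((Dᶜ ×ˢ Dᶜ)ᶜ) volume := by
    refine Integrable.mono' hint hgm.aestronglyMeasurable ?_
    filter_upwards with p
    have h2 := hν_nonneg (p.1 - p.2)
    rw [Real.norm_eq_abs, abs_mul, abs_mul, abs_of_nonneg h2]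
    nlinarith [mul_nonneg (mul_nonneg (abs_nonneg (u p.1 - u p.2)) h2) (abs_nonneg (v p.2))]
  have hg'E : IntegrableOn
      (fun p : EuclideanSpace ℝ (Fin d) × EuclideanSpace ℝ (Fin d) =>
        (u p.1 - u p.2) * ν (p.1 - p.2) * v p.2) ((Dᶜ ×ˢ Dᶜ)ᶜ) volume := by
    refine Integrable.mono' hint hg'm.aestronglyMeasurable ?_
    filter_upwards with p
    have h2 := hν_nonneg (p.1 - p.2)
    rw [Real.norm_eq_abs, abs_mul, abs_mul, abs_of_nonneg h2]
    nlinarith [mul_nonneg (mul_nonneg (abs_nonneg (u p.1 - u p.2)) h2) (abs_nonneg (v p.1))]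
  have hsub1 : (D ×ˢ (univ : Set (EuclideanSpace ℝ (Fin d)))) ⊆ (Dᶜ ×ˢ Dᶜ)ᶜ := by
    intro p hp
    simp only [mem_compl_iff, mem_prod] at hp ⊢
    tauto
  have hsub2 : ((Dᶜ : Set (EuclideanSpace ℝ (Fin d))) ×ˢ D) ⊆ (Dᶜ ×ˢ Dᶜ)ᶜ := by
    intro p hp
    simp only [mem_compl_iff, mem_prod] at hp ⊢
    tauto
  have hg1 := hgE.mono_set hsub1
  have hg2 := hgE.mono_set hsub2
  -- Fubini for the LHS term
  have h1 : ∫ p in D ×ˢ (univ : Set (EuclideanSpace ℝ (Fin d))),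
      (u p.1 - u p.2) * ν (p.1 - p.2) * v p.1 =
      ∫ x in D, (∫ y, (u x - u y) * ν (x - y)) * v x := by
    rw [hvolprod] at hg1 ⊢
    rw [setIntegral_prod _ hg1]
    simp only [Measure.restrict_univ]
    simp_rw [MeasureTheory.integral_mul_const]
  -- Fubini for the Neumann term
  have h2 : ∫ p in (Dᶜ : Set (EuclideanSpace ℝ (Fin d))) ×ˢ D,
      (u p.1 - u p.2) * ν (p.1 - p.2) * v p.1 =
      ∫ y in Dᶜ, (∫ x in D, (u y - u x) * ν (x - y)) * v y := by
    rw [hvolprod] at hg2 ⊢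
    rw [setIntegral_prod _ hg2]
    refine setIntegral_congr_fun hD.compl fun a _ => ?_
    simp_rw [MeasureTheory.integral_mul_const]
    congr 1
    refine setIntegral_congr_fun hD fun b _ => ?_
    rw [hνsymm' a b]
  -- swap symmetry
  have hswapE : Prod.swap '' ((Dᶜ ×ˢ Dᶜ)ᶜ : Set (EuclideanSpace ℝ (Fin d) × EuclideanSpace ℝ (Fin d)))
      = (Dᶜ ×ˢ Dᶜ)ᶜ := by
    ext p
    simp only [Set.image_swap_eq_preimage_swap, mem_preimage, mem_compl_iff,
      mem_prod, Prod.fst_swap, Prod.snd_swap]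
    tauto
  have h3 : ∫ p in ((Dᶜ ×ˢ Dᶜ)ᶜ : Set (EuclideanSpace ℝ (Fin d) × EuclideanSpace ℝ (Fin d))),
      (u p.1 - u p.2) * ν (p.1 - p.2) * v p.2 =
      - ∫ p in ((Dᶜ ×ˢ Dᶜ)ᶜ : Set (EuclideanSpace ℝ (Fin d) × EuclideanSpace ℝ (Fin d))),
      (u p.1 - u p.2) * ν (p.1 - p.2) * v p.1 := by
    have hmp : MeasurePreserving
        (Prod.swap : EuclideanSpace ℝ (Fin d) × EuclideanSpace ℝ (Fin d) →
          EuclideanSpace ℝ (Fin d) × EuclideanSpace ℝ (Fin d)) volume volume := by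
      rw [hvolprod]
      exact Measure.measurePreserving_swap
    have key := hmp.setIntegral_image_emb MeasurableEquiv.prodComm.measurableEmbedding
      (fun p : EuclideanSpace ℝ (Fin d) × EuclideanSpace ℝ (Fin d) =>
        (u p.1 - u p.2) * ν (p.1 - p.2) * v p.2) ((Dᶜ ×ˢ Dᶜ)ᶜ)
    rw [hswapE] at key
    rw [key, ← MeasureTheory.integral_neg]
    refine integral_congr_ae (Filter.Eventually.of_forall fun p => ?_)
    simp only [Prod.fst_swap, Prod.snd_swap]
    rw [hνsymm' p.2 p.1]
    ring
  -- splitting E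
  have hsplit : ((Dᶜ ×ˢ Dᶜ)ᶜ : Set (EuclideanSpace ℝ (Fin d) × EuclideanSpace ℝ (Fin d)))
      = (D ×ˢ (univ : Set (EuclideanSpace ℝ (Fin d)))) ∪ (Dᶜ ×ˢ D) := by
    ext p
    simp only [mem_compl_iff, mem_prod, mem_union, mem_univ, and_true]
    tauto
  have hdisj : Disjoint (D ×ˢ (univ : Set (EuclideanSpace ℝ (Fin d))))
      ((Dᶜ : Set (EuclideanSpace ℝ (Fin d))) ×ˢ D) := by
    rw [Set.disjoint_left]
    rintro p ⟨hp1, -⟩ ⟨hp1', -⟩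
    exact hp1' hp1
  have h4 : ∫ p in ((Dᶜ ×ˢ Dᶜ)ᶜ : Set (EuclideanSpace ℝ (Fin d) × EuclideanSpace ℝ (Fin d))),
      (u p.1 - u p.2) * ν (p.1 - p.2) * v p.1 =
      (∫ p in D ×ˢ (univ : Set (EuclideanSpace ℝ (Fin d))),
        (u p.1 - u p.2) * ν (p.1 - p.2) * v p.1) +
      ∫ p in (Dᶜ : Set (EuclideanSpace ℝ (Fin d))) ×ˢ D,
        (u p.1 - u p.2) * ν (p.1 - p.2) * v p.1 := by
    rw [hsplit]
    exact setIntegral_union hdisj (hD.compl.prod hD) hg1 hg2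
  have h5 : ∫ p in ((Dᶜ ×ˢ Dᶜ)ᶜ : Set (EuclideanSpace ℝ (Fin d) × EuclideanSpace ℝ (Fin d))),
      (u p.1 - u p.2) * (v p.1 - v p.2) * ν (p.1 - p.2) =
      (∫ p in ((Dᶜ ×ˢ Dᶜ)ᶜ : Set (EuclideanSpace ℝ (Fin d) × EuclideanSpace ℝ (Fin d))),
        (u p.1 - u p.2) * ν (p.1 - p.2) * v p.1) -
      ∫ p in ((Dᶜ ×ˢ Dᶜ)ᶜ : Set (EuclideanSpace ℝ (Fin d) × EuclideanSpace ℝ (Fin d))),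
        (u p.1 - u p.2) * ν (p.1 - p.2) * v p.2 := by
    rw [← integral_sub hgE hg'E]
    refine integral_congr_ae (Filter.Eventually.of_forall fun p => ?_)
    ring
  rw [← h1, ← h2, h5, h3, h4]
  ring
end

section
/- For every H ∈ (1/2, 1) and all real numbers 0 < s' < s, the integral ∫₀^{s'} r^{1−2H} (s−r)^{H−3/2} (s'−r)^{H−3/2} dr converges and equals B(2−2H, H−1/2) · (s s')^{1/2−H} · (s−s')^{2H−2}, where B denotes the Euler Beta function. -/
open MeasureTheory Set

/-- The Euler Beta function `B(a,b) = Γ(a)Γ(b)/Γ(a+b)`. -/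
noncomputable def eulerBeta (a b : ℝ) : ℝ := Real.Gamma a * Real.Gamma b / Real.Gamma (a + b)

/-- The real Beta integral `∫₀¹ t^{a-1}(1-t)^{b-1} dt = Γ(a)Γ(b)/Γ(a+b)` for `a, b > 0`. -/
lemma realBeta (a b : ℝ) (ha : 0 < a) (hb : 0 < b) :
    IntegrableOn (fun t : ℝ => t ^ (a - 1) * (1 - t) ^ (b - 1)) (Ioo 0 1) volume ∧
    ∫ t in Ioo (0:ℝ) 1, t ^ (a - 1) * (1 - t) ^ (b - 1) = eulerBeta a b := by
  have hconv := Complex.betaIntegral_convergent (u := (a : ℂ)) (v := (b : ℂ)) (by simpa) (by simpa)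
  have hIoo : IntegrableOn (fun x : ℝ => (x : ℂ) ^ ((a : ℂ) - 1) * ((1 : ℂ) - x) ^ ((b : ℂ) - 1))
      (Ioo 0 1) volume :=
    (intervalIntegrable_iff_integrableOn_Ioo_of_le (by norm_num)).mp hconv
  have hcongr : ∀ x ∈ Icc (0:ℝ) 1,
      ((x ^ (a - 1) * (1 - x) ^ (b - 1) : ℝ) : ℂ)
        = (x : ℂ) ^ ((a : ℂ) - 1) * ((1 : ℂ) - x) ^ ((b : ℂ) - 1) := by
    intro x hx
    push_cast
    rw [Complex.ofReal_cpow hx.1, Complex.ofReal_cpow (by linarith [hx.2] : (0:ℝ) ≤ 1 - x)]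
    push_cast
    ring
  have hint : IntegrableOn (fun t : ℝ => t ^ (a - 1) * (1 - t) ^ (b - 1)) (Ioo 0 1) volume := by
    have hC : IntegrableOn (fun x : ℝ => ((x ^ (a - 1) * (1 - x) ^ (b - 1) : ℝ) : ℂ))
        (Ioo 0 1) volume :=
      hIoo.congr_fun (fun x hx => (hcongr x (Ioo_subset_Icc_self hx)).symm) measurableSet_Ioo
    simpa [IntegrableOn] using hC.re
  refine ⟨hint, ?_⟩
  have h1 : ((∫ t in Ioo (0:ℝ) 1, t ^ (a - 1) * (1 - t) ^ (b - 1) : ℝ) : ℂ)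
      = Complex.betaIntegral a b := by
    have heq : EqOn (fun x : ℝ => (x : ℂ) ^ ((a : ℂ) - 1) * ((1 : ℂ) - x) ^ ((b : ℂ) - 1))
        (fun x : ℝ => ((x ^ (a - 1) * (1 - x) ^ (b - 1) : ℝ) : ℂ)) (uIcc 0 1) := by
      intro x hx
      rw [uIcc_of_le (by norm_num : (0:ℝ) ≤ 1)] at hx
      exact (hcongr x hx).symm
    rw [Complex.betaIntegral, intervalIntegral.integral_congr heq,
      intervalIntegral.integral_ofReal, intervalIntegral.integral_of_le (by norm_num : (0:ℝ) ≤ 1),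
      integral_Ioc_eq_integral_Ioo]
  have h2 : Complex.betaIntegral a b
      = (Real.Gamma a : ℂ) * Real.Gamma b / Real.Gamma (a + b) := by
    have := Complex.Gamma_mul_Gamma_eq_betaIntegral (s := (a:ℂ)) (t := (b:ℂ)) (by simpa) (by simpa)
    have hG : Complex.Gamma ((a:ℂ) + b) ≠ 0 := by
      rw [show ((a:ℂ) + b) = ((a + b : ℝ) : ℂ) by push_cast; ring, Complex.Gamma_ofReal]
      exact_mod_cast (Real.Gamma_pos_of_pos (by linarith)).ne'
    have hG2 : ((Real.Gamma (a + b) : ℝ) : ℂ) ≠ 0 := by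
      exact_mod_cast (Real.Gamma_pos_of_pos (by linarith : (0:ℝ) < a + b)).ne'
    have hcast : ((Real.Gamma (a + b) : ℝ) : ℂ) = Complex.Gamma ((a:ℂ) + b) := by
      rw [← Complex.Gamma_ofReal]; norm_cast
    rw [eq_div_iff hG2, hcast, mul_comm ((Complex.betaIntegral (a:ℂ) (b:ℂ))), ← this,
      Complex.Gamma_ofReal, Complex.Gamma_ofReal]
  rw [h2] at h1
  have : ((∫ t in Ioo (0:ℝ) 1, t ^ (a - 1) * (1 - t) ^ (b - 1) : ℝ) : ℂ)
      = ((eulerBeta a b : ℝ) : ℂ) := by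
    rw [h1, eulerBeta]; push_cast; ring
  exact_mod_cast this


/-- For `H ∈ (1/2,1)` and `0 < s' < s`, the integral
`∫₀^{s'} r^{1-2H} (s-r)^{H-3/2} (s'-r)^{H-3/2} dr` converges and equals
`B(2-2H, H-1/2) (s s')^{1/2-H} (s-s')^{2H-2}`. -/
theorem volterra_kernel_integral (H s s' : ℝ)
    (hH : H ∈ Set.Ioo (1 / 2 : ℝ) 1) (hs' : 0 < s') (hss : s' < s) :
    IntegrableOn
      (fun r : ℝ => r ^ (1 - 2 * H) * (s - r) ^ (H - 3 / 2) * (s' - r) ^ (H - 3 / 2))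
      (Set.Ioo 0 s') volume ∧
    ∫ r in Set.Ioo 0 s',
        r ^ (1 - 2 * H) * (s - r) ^ (H - 3 / 2) * (s' - r) ^ (H - 3 / 2) =
      eulerBeta (2 - 2 * H) (H - 1 / 2) * (s * s') ^ (1 / 2 - H) * (s - s') ^ (2 * H - 2) := by
  obtain ⟨hH1, hH2⟩ := hH
  have hs0 : 0 < s := hs'.trans hss
  have hd : 0 < s - s' := by linarith
  set φ : ℝ → ℝ := fun t => s * s' * t / (s - s' + s' * t) with hφdef
  set φ' : ℝ → ℝ := fun t => s * s' * (s - s') / (s - s' + s' * t) ^ 2 with hφ'def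
  have hD : ∀ t ∈ Ioo (0:ℝ) 1, 0 < s - s' + s' * t := by
    intro t ht
    nlinarith [ht.1]
  have hderiv : ∀ t ∈ Ioo (0:ℝ) 1, HasDerivWithinAt φ (φ' t) (Ioo 0 1) t := by
    intro t ht
    have hDt := hD t ht
    have h := (((hasDerivAt_id t).const_mul (s * s')).div
      (((hasDerivAt_id t).const_mul s').const_add (s - s')) hDt.ne')
    simp only [id_eq, mul_one] at h
    have heq : (s * s' * (s - s' + s' * t) - s * s' * t * s') / (s - s' + s' * t) ^ 2
        = φ' t := by
      rw [hφ'def]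
      congr 1
      ring
    rw [heq] at h
    exact h.hasDerivWithinAt
  have hinj : InjOn φ (Ioo 0 1) := by
    intro x hx y hy hxy
    have hDx := hD x hx
    have hDy := hD y hy
    rw [hφdef] at hxy
    simp only at hxy
    rw [div_eq_div_iff hDx.ne' hDy.ne'] at hxy
    have h0 : s * s' * (s - s') * x = s * s' * (s - s') * y := by nlinarith [hxy]
    exact mul_left_cancel₀ (by positivity) h0
  have himg : φ '' Ioo 0 1 = Ioo 0 s' := by
    ext y
    simp only [mem_image, mem_Ioo]
    constructor
    · rintro ⟨t, ⟨ht0, ht1⟩, rfl⟩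
      have hDt : 0 < s - s' + s' * t := by nlinarith
      refine ⟨by positivity, ?_⟩
      rw [hφdef]
      simp only
      rw [div_lt_iff₀ hDt]
      nlinarith [mul_pos (mul_pos hs' hd) (sub_pos.mpr ht1)]
    · rintro ⟨hy0, hy1⟩
      have hsy : 0 < s - y := by linarith
      refine ⟨y * (s - s') / (s' * (s - y)), ⟨by positivity, ?_⟩, ?_⟩
      · rw [div_lt_one (by positivity)]
        nlinarith
      · have hden : s - s' + s' * (y * (s - s') / (s' * (s - y))) = s * (s - s') / (s - y) := by
          field_simp
          ring
        rw [hφdef]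
        simp only
        rw [hden]
        field_simp
  -- pointwise identity
  have hpt : ∀ t ∈ Ioo (0:ℝ) 1,
      |φ' t| * (φ t ^ (1 - 2 * H) * (s - φ t) ^ (H - 3 / 2) * (s' - φ t) ^ (H - 3 / 2))
        = (s * s') ^ (1 / 2 - H) * (s - s') ^ (2 * H - 2)
            * (t ^ (1 - 2 * H) * (1 - t) ^ (H - 3 / 2)) := by
    intro t ht
    obtain ⟨ht0, ht1⟩ := ht
    have hDt : 0 < s - s' + s' * t := by nlinarith
    have h1t : 0 < 1 - t := by linarith
    have e1 : s - φ t = s * (s - s') / (s - s' + s' * t) := by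
      rw [hφdef]; field_simp; ring
    have e2 : s' - φ t = s' * (s - s') * (1 - t) / (s - s' + s' * t) := by
      rw [hφdef]; field_simp; ring
    have e0 : φ t = s * s' * t / (s - s' + s' * t) := rfl
    rw [e0, e1, e2, hφ'def]
    simp only
    rw [abs_of_pos (by positivity)]
    have efact : s * s' * (s - s') / (s - s' + s' * t) ^ 2
        = Real.exp (Real.log s + Real.log s' + Real.log (s - s')
            - 2 * Real.log (s - s' + s' * t)) := by
      rw [Real.exp_sub, Real.exp_add, Real.exp_add, Real.exp_log hs0, Real.exp_log hs',
        Real.exp_log hd, two_mul, Real.exp_add, Real.exp_log hDt, sq]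
    have hl1 : Real.log (s * s' * t / (s - s' + s' * t))
        = Real.log s + Real.log s' + Real.log t - Real.log (s - s' + s' * t) := by
      rw [Real.log_div (by positivity) hDt.ne', Real.log_mul (by positivity) ht0.ne',
        Real.log_mul hs0.ne' hs'.ne']
    have hl2 : Real.log (s * (s - s') / (s - s' + s' * t))
        = Real.log s + Real.log (s - s') - Real.log (s - s' + s' * t) := by
      rw [Real.log_div (by positivity) hDt.ne', Real.log_mul hs0.ne' hd.ne']
    have hl3 : Real.log (s' * (s - s') * (1 - t) / (s - s' + s' * t))
        = Real.log s' + Real.log (s - s') + Real.log (1 - t) - Real.log (s - s' + s' * t) := by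
      rw [Real.log_div (by positivity) hDt.ne', Real.log_mul (by positivity) h1t.ne',
        Real.log_mul hs'.ne' hd.ne']
    have hl4 : Real.log (s * s') = Real.log s + Real.log s' := Real.log_mul hs0.ne' hs'.ne'
    rw [Real.rpow_def_of_pos (show (0:ℝ) < s * s' * t / (s - s' + s' * t) by positivity),
      Real.rpow_def_of_pos (show (0:ℝ) < s * (s - s') / (s - s' + s' * t) by positivity),
      Real.rpow_def_of_pos (show (0:ℝ) < s' * (s - s') * (1 - t) / (s - s' + s' * t) by positivity),
      Real.rpow_def_of_pos (show (0:ℝ) < s * s' by positivity),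
      Real.rpow_def_of_pos hd,
      Real.rpow_def_of_pos ht0,
      Real.rpow_def_of_pos h1t,
      efact, hl1, hl2, hl3, hl4]
    rw [← Real.exp_add, ← Real.exp_add, ← Real.exp_add, ← Real.exp_add, ← Real.exp_add,
      ← Real.exp_add, Real.exp_eq_exp]
    ring
  -- beta integral
  have hbeta := by
    have ha : (0:ℝ) < 2 - 2 * H := by linarith
    have hb : (0:ℝ) < H - 1 / 2 := by linarith
    exact realBeta (2 - 2 * H) (H - 1 / 2) ha hb
  rw [show (2 - 2 * H - 1 : ℝ) = 1 - 2 * H by ring,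
    show (H - 1 / 2 - 1 : ℝ) = H - 3 / 2 by ring] at hbeta
  obtain ⟨hbInt, hbVal⟩ := hbeta
  have key := integrableOn_image_iff_integrableOn_abs_deriv_smul measurableSet_Ioo hderiv hinj
    (fun r : ℝ => r ^ (1 - 2 * H) * (s - r) ^ (H - 3 / 2) * (s' - r) ^ (H - 3 / 2))
  rw [himg] at key
  have hI := integral_image_eq_integral_abs_deriv_smul measurableSet_Ioo hderiv hinj
    (fun r : ℝ => r ^ (1 - 2 * H) * (s - r) ^ (H - 3 / 2) * (s' - r) ^ (H - 3 / 2))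
  rw [himg] at hI
  simp only [smul_eq_mul] at key hI
  constructor
  · rw [key]
    exact IntegrableOn.congr_fun
      (hbInt.const_mul ((s * s') ^ (1 / 2 - H) * (s - s') ^ (2 * H - 2)))
      (fun t ht => (hpt t ht).symm) measurableSet_Ioo
  · rw [hI, setIntegral_congr_fun measurableSet_Ioo hpt, integral_const_mul, hbVal]
    ring
end
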